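/- In polar coordinates z = r e^{iθ}, the complex Hermite polynomial with α > 0 satisfies H^α_{m,p}(re^{iθ}, re^{−iθ}) = α^p m! (−1)^m e^{iθ(p−m)} r^{p−m} L_m^{p−m}(α r²), where L_m^β denotes the generalized Laguerre polynomial, valid for p ≥ m. -/

import Mathlib

open Complex Nat Finset

/-- Wirtinger derivative `∂_z`. -/
noncomputable def wirtingerZ : (ℂ → ℂ) → (ℂ → ℂ) := fun f z =>
  (1 / 2 : ℂ) * (fderiv ℝ f z 1 - Complex.I * fderiv ℝ f z Complex.I)

/-- Anti-Wirtinger derivative `∂_z̄`. -/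
noncomputable def wirtingerZBar : (ℂ → ℂ) → (ℂ → ℂ) := fun f z =>
  (1 / 2 : ℂ) * (fderiv ℝ f z 1 + Complex.I * fderiv ℝ f z Complex.I)

/-- Complex Hermite polynomials
`H^α_{m,p}(z, z̄) = (-1)^{m+p} e^{α|z|²} ∂_z^m ∂_z̄^p e^{-α|z|²}`. -/
noncomputable def cHermite (α : ℝ) (m p : ℕ) (z : ℂ) : ℂ :=
  (-1) ^ (m + p) * Complex.exp ((α : ℂ) * (z * (starRingEnd ℂ) z))
    * (wirtingerZ^[m] (wirtingerZBar^[p]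
        (fun w => Complex.exp (-(α : ℂ) * (w * (starRingEnd ℂ) w))))) z

/-- Generalized Laguerre polynomial `L_m^β(x) = ∑_{k=0}^m (−1)^k C(m+β, m−k) x^k / k!`. -/
noncomputable def laguerre (m β : ℕ) (x : ℝ) : ℝ :=
  ∑ k ∈ Finset.range (m + 1),
    (-1) ^ k * (Nat.choose (m + β) (m - k) : ℝ) * x ^ k / (k ! : ℝ)

/-!
Since `∂_z̄ (e^{-α|z|²}) = -α z e^{-α|z|²}` and `∂_z z̄ = 0`, one gets
`∂_z̄^p e^{-α|z|²} = (-α)^p z^p e^{-α|z|²}`, and `∂_z^m` of this is a Leibniz sum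
`∑_i C(m,i) p(p-1)⋯(p-i+1) (-α z̄)^{m-i} z^{p-i} e^{-α|z|²}`. After cancelling the Gaussian,
reindexing by `j = m - i` and factoring out `z^{p-m}`, the coefficients
`C(m,m-j) p(p-1)⋯(p-m+j+1) = m! C(p,m-j) / j!` are exactly those of `L_m^{p-m}(α|z|²)`.
In polar coordinates `|z|² = r²` and `z^{p-m} = r^{p-m} e^{iθ(p-m)}`.
-/

open ComplexConjugate

section Wirtinger

variable {f : ℂ → ℂ} {w : ℂ}

theorem wirtingerZ_eq_of_hasFDerivAt {A B : ℂ}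
    (h : HasFDerivAt f (A • ContinuousLinearMap.id ℝ ℂ + B • conjCLE.toContinuousLinearMap) w) :
    wirtingerZ f w = A := by
  simp only [wirtingerZ, h.fderiv, add_apply, smul_apply, smul_eq_mul,
    ContinuousLinearMap.id_apply, ContinuousLinearEquiv.coe_coe, conjCLE_apply, map_one, conj_I]
  linear_combination (B - A) / 2 * I_sq

theorem wirtingerZBar_eq_of_hasFDerivAt {A B : ℂ}
    (h : HasFDerivAt f (A • ContinuousLinearMap.id ℝ ℂ + B • conjCLE.toContinuousLinearMap) w) :
    wirtingerZBar f w = B := by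
  simp only [wirtingerZBar, h.fderiv, add_apply, smul_apply, smul_eq_mul,
    ContinuousLinearMap.id_apply, ContinuousLinearEquiv.coe_coe, conjCLE_apply, map_one, conj_I]
  linear_combination (A - B) / 2 * I_sq

theorem wirtingerZ_const_mul (c : ℂ) (h : DifferentiableAt ℝ f w) :
    wirtingerZ (fun z => c * f z) w = c * wirtingerZ f w := by
  simp only [wirtingerZ, (h.hasFDerivAt.const_mul c).fderiv, smul_apply, smul_eq_mul]
  ring

theorem wirtingerZBar_const_mul (c : ℂ) (h : DifferentiableAt ℝ f w) :
    wirtingerZBar (fun z => c * f z) w = c * wirtingerZBar f w := by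
  simp only [wirtingerZBar, (h.hasFDerivAt.const_mul c).fderiv, smul_apply, smul_eq_mul]
  ring

theorem wirtingerZ_sum {ι : Type*} (s : Finset ι) {g : ι → ℂ → ℂ}
    (h : ∀ i ∈ s, DifferentiableAt ℝ (g i) w) :
    wirtingerZ (fun z => ∑ i ∈ s, g i z) w = ∑ i ∈ s, wirtingerZ (g i) w := by
  simp only [wirtingerZ, (HasFDerivAt.fun_sum fun i hi => (h i hi).hasFDerivAt).fderiv,
    _root_.sum_apply]
  rw [mul_sum, ← sum_sub_distrib, mul_sum]

end Wirtinger

noncomputable def gaussMonomial (α : ℝ) (a b : ℕ) (w : ℂ) : ℂ :=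
  w ^ a * conj w ^ b * exp (-α * (w * conj w))

theorem hasFDerivAt_gaussMonomial (α : ℝ) (a b : ℕ) (w : ℂ) :
    HasFDerivAt (gaussMonomial α a b)
      ((a * gaussMonomial α (a - 1) b w - α * gaussMonomial α a (b + 1) w)
          • ContinuousLinearMap.id ℝ ℂ
        + (b * gaussMonomial α a (b - 1) w - α * gaussMonomial α (a + 1) b w)
          • conjCLE.toContinuousLinearMap) w := by
  have hconj : HasFDerivAt (conj : ℂ → ℂ) conjCLE.toContinuousLinearMap w :=
    conjCLE.hasFDerivAt
  have hpow := ((hasDerivAt_pow a w).hasFDerivAt.restrictScalars ℝ)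
  have hpow_conj := ((hasDerivAt_pow b (conj w)).hasFDerivAt.restrictScalars ℝ).comp w hconj
  have hexp := ((hasDerivAt_exp _).hasFDerivAt.restrictScalars ℝ).comp w
    (((hasFDerivAt_id w).mul' hconj).const_mul (-(α : ℂ)))
  refine ((hpow.mul hpow_conj).mul hexp).congr_fderiv ?_
  ext v
  simp only [Pi.mul_apply, Function.comp_apply, id_eq, neg_mul, op_smul_eq_smul, smul_add, neg_smul,
    Complex.coe_smul, ContinuousLinearMap.comp_add, ContinuousLinearMap.comp_neg,
    ContinuousLinearMap.comp_smulₛₗ, Real.ringHom_apply, smul_neg, add_apply, neg_apply,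
    smul_apply, ContinuousLinearMap.comp_apply, ContinuousLinearEquiv.coe_coe,
    ContinuousAlgEquiv.coeCLE_apply, conjCAE_apply, smul_eq_mul,
    ContinuousLinearMap.coe_restrictScalars', ContinuousLinearMap.toSpanSingleton_apply, real_smul,
    ContinuousLinearMap.id_apply, gaussMonomial]
  ring

theorem differentiableAt_gaussMonomial (α : ℝ) (a b : ℕ) (w : ℂ) :
    DifferentiableAt ℝ (gaussMonomial α a b) w :=
  (hasFDerivAt_gaussMonomial α a b w).differentiableAt

theorem wirtingerZ_gaussMonomial (α : ℝ) (a b : ℕ) (w : ℂ) :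
    wirtingerZ (gaussMonomial α a b) w
      = a * gaussMonomial α (a - 1) b w - α * gaussMonomial α a (b + 1) w :=
  wirtingerZ_eq_of_hasFDerivAt (hasFDerivAt_gaussMonomial α a b w)

theorem wirtingerZBar_gaussMonomial (α : ℝ) (a b : ℕ) (w : ℂ) :
    wirtingerZBar (gaussMonomial α a b) w
      = b * gaussMonomial α a (b - 1) w - α * gaussMonomial α (a + 1) b w :=
  wirtingerZBar_eq_of_hasFDerivAt (hasFDerivAt_gaussMonomial α a b w)

theorem iterate_wirtingerZBar_gaussian (α : ℝ) (p : ℕ) :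
    wirtingerZBar^[p] (fun w => exp (-α * (w * conj w)))
      = fun w => (-α : ℂ) ^ p * gaussMonomial α p 0 w := by
  induction p with
  | zero => funext w; simp [gaussMonomial]
  | succ p ih =>
    funext w
    rw [Function.iterate_succ_apply', ih,
      wirtingerZBar_const_mul _ (differentiableAt_gaussMonomial α p 0 w),
      wirtingerZBar_gaussMonomial]
    simp only [CharP.cast_eq_zero, zero_mul, zero_sub, pow_succ]
    ring

-- A term of the Leibniz expansion of `∂_z^{i+j} (z^p z̄^b e^{-α|z|²})`, using `∂_z z̄ = 0`.
noncomputable def leibnizTerm (α : ℝ) (p b i j : ℕ) (w : ℂ) : ℂ :=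
  p.descFactorial i * (-α : ℂ) ^ j * gaussMonomial α (p - i) (b + j) w

theorem differentiableAt_leibnizTerm (α : ℝ) (p b i j : ℕ) (w : ℂ) :
    DifferentiableAt ℝ (leibnizTerm α p b i j) w :=
  (differentiableAt_gaussMonomial α _ _ w).const_mul _

theorem wirtingerZ_leibnizTerm (α : ℝ) (p b i j : ℕ) (w : ℂ) :
    wirtingerZ (leibnizTerm α p b i j) w
      = leibnizTerm α p b (i + 1) j w + leibnizTerm α p b i (j + 1) w := by
  change wirtingerZ (fun z => (p.descFactorial i * (-α : ℂ) ^ j) * gaussMonomial α _ _ z) w = _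
  rw [wirtingerZ_const_mul _ (differentiableAt_gaussMonomial α _ _ w), wirtingerZ_gaussMonomial]
  simp only [leibnizTerm, Nat.descFactorial_succ, Nat.sub_sub, ← add_assoc, pow_succ]
  push_cast
  ring

theorem iterate_wirtingerZ_gaussMonomial (α : ℝ) (p b m : ℕ) (c : ℂ) :
    wirtingerZ^[m] (fun w => c * gaussMonomial α p b w)
      = fun w => c * ∑ i ∈ range (m + 1), m.choose i * leibnizTerm α p b i (m - i) w := by
  induction m with
  | zero => funext w; simp [leibnizTerm]
  | succ m ih =>
    funext w
    have hdiff : ∀ i ∈ range (m + 1),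
        DifferentiableAt ℝ (fun z => (m.choose i : ℂ) * leibnizTerm α p b i (m - i) z) w :=
      fun i _ => (differentiableAt_leibnizTerm α p b i _ w).const_mul _
    rw [Function.iterate_succ_apply', ih,
      wirtingerZ_const_mul _ (DifferentiableAt.fun_sum hdiff), wirtingerZ_sum _ hdiff,
      sum_choose_succ_mul (fun i j => leibnizTerm α p b i j w), ← sum_add_distrib]
    congr 1
    refine sum_congr rfl fun i hi => ?_
    have hsub : m + 1 - i = m - i + 1 := by have := mem_range.mp hi; omega
    rw [wirtingerZ_const_mul _ (differentiableAt_leibnizTerm α p b i _ w),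
      wirtingerZ_leibnizTerm, hsub]
    ring

theorem neg_one_pow_add_mul_neg_pow {R : Type*} [CommRing R] (m p : ℕ) (x : R) :
    (-1) ^ (m + p) * (-x) ^ p = (-1) ^ m * x ^ p := by
  have h : ((-1) ^ p * (-1) ^ p : R) = 1 := by rw [← mul_pow]; norm_num
  linear_combination (-1) ^ m * x ^ p * h

theorem cHermite_eq_sum (α : ℝ) (m p : ℕ) (z : ℂ) :
    cHermite α m p z = (-1) ^ m * α ^ p * ∑ i ∈ range (m + 1),
      m.choose i * p.descFactorial i * (-α : ℂ) ^ (m - i) * z ^ (p - i) * conj z ^ (m - i) := by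
  have hexp : exp (α * (z * conj z)) * exp (-α * (z * conj z)) = 1 := by
    rw [← exp_add, ← add_mul, add_neg_cancel, zero_mul, exp_zero]
  rw [cHermite, iterate_wirtingerZBar_gaussian, iterate_wirtingerZ_gaussMonomial,
    ← neg_one_pow_add_mul_neg_pow]
  simp only [mul_sum]
  refine sum_congr rfl fun i _ => ?_
  simp only [leibnizTerm, gaussMonomial, zero_add]
  linear_combination (-1) ^ (m + p) * (-α : ℂ) ^ p * m.choose i * p.descFactorial i
    * (-α : ℂ) ^ (m - i) * z ^ (p - i) * conj z ^ (m - i) * hexp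

theorem choose_mul_descFactorial_mul_factorial {m j : ℕ} (p : ℕ) (hj : j ≤ m) :
    m.choose (m - j) * p.descFactorial (m - j) * j ! = m ! * p.choose (m - j) := by
  rw [Nat.descFactorial_eq_factorial_mul_choose,
    ← Nat.choose_mul_factorial_mul_factorial (Nat.sub_le m j), Nat.sub_sub_self hj]
  ring

theorem cHermite_eq_laguerre (α : ℝ) {m p : ℕ} (hmp : m ≤ p) (z : ℂ) :
    cHermite α m p z
      = α ^ p * m ! * (-1) ^ m * z ^ (p - m) * (laguerre m (p - m) (α * normSq z) : ℂ) := by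
  rw [cHermite_eq_sum, ← sum_range_reflect, laguerre, Nat.add_sub_cancel' hmp]
  push_cast
  rw [mul_sum, mul_sum]
  refine sum_congr rfl fun j hj => ?_
  have hjm : j ≤ m := Nat.lt_succ_iff.mp (mem_range.mp hj)
  have hkey : (m.choose (m - j) * p.descFactorial (m - j) * j ! : ℂ) = m ! * p.choose (m - j) := by
    exact_mod_cast choose_mul_descFactorial_mul_factorial p hjm
  rw [Nat.sub_sub_self hjm, show p - (m - j) = p - m + j by omega,
    ← mul_conj, neg_pow (α : ℂ), mul_pow, pow_add]
  field_simp [j.factorial_ne_zero]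
  linear_combination α ^ p * α ^ j * z ^ (p - m) * z ^ j * conj z ^ j * hkey

theorem cHermite_polar_general (α : ℝ) (m p : ℕ) (hmp : m ≤ p) (r θ : ℝ) :
    cHermite α m p ((r : ℂ) * Complex.exp ((θ : ℂ) * Complex.I))
      = (α : ℂ) ^ p * (m ! : ℂ) * (-1) ^ m
        * Complex.exp ((θ : ℂ) * ((p - m : ℕ) : ℂ) * Complex.I)
        * (r : ℂ) ^ (p - m) * ((laguerre m (p - m) (α * r ^ 2) : ℝ) : ℂ) := by
  have hnormSq : normSq (r * exp (θ * I)) = r ^ 2 := by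
    rw [normSq_eq_norm_sq, norm_mul, norm_exp_ofReal_mul_I, mul_one, norm_real, Real.norm_eq_abs,
      sq_abs]
  have hpow : (r * exp (θ * I)) ^ (p - m) = r ^ (p - m) * exp (θ * (p - m : ℕ) * I) := by
    rw [mul_pow, ← exp_nat_mul]
    ring_nf
  rw [cHermite_eq_laguerre α hmp, hnormSq, hpow]
  ring

theorem cHermite_polar (α : ℝ) (hα : 0 < α) (m p : ℕ) (hmp : m ≤ p) (r θ : ℝ) :
    cHermite α m p ((r : ℂ) * Complex.exp ((θ : ℂ) * Complex.I))
      = (α : ℂ) ^ p * (m ! : ℂ) * (-1) ^ m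
        * Complex.exp ((θ : ℂ) * ((p - m : ℕ) : ℂ) * Complex.I)
        * (r : ℂ) ^ (p - m) * ((laguerre m (p - m) (α * r ^ 2) : ℝ) : ℂ) :=
  cHermite_polar_general α m p hmp r θ
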